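/- (Lemma 3.3) Let c > 0, M ≥ 0, let f : ℝ → ℝ be measurable with 0 ≤ f(λ) ≤ M for all λ, let φ ∈ L²(ℝ, ℂ), and let g ∈ L¹(ℝ) be nonnegative. Then for all T > 0 and all τ₁, τ₂ ∈ ℝ, the function (λ₁,λ₂) ↦ [e^{i(τ₁−τ₂)λ₂}·(|φ(λ₂)|²·f(λ₂) + g(λ₂)) + e^{i(τ₁λ₁+τ₂λ₂)}·φ(λ₁)·φ(λ₂)·f(λ₂)]·Φ_T(λ₂−λ₁)·f(λ₁) is Lebesgue integrable on ℝ², and |(2π/c²) ∬_{ℝ²} [e^{i(τ₁−τ₂)λ₂}·(|φ(λ₂)|²·f(λ₂) + g(λ₂)) + e^{i(τ₁λ₁+τ₂λ₂)}·φ(λ₁)·φ(λ₂)·f(λ₂)]·Φ_T(λ₂−λ₁)·f(λ₁) dλ₁ dλ₂| ≤ (2π/c²)·M·(2M·‖φ‖_{L²}² + ‖g‖_{L¹}). In particular the bound is uniform in T > 0 and τ₁, τ₂ ∈ ℝ. -/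

import Mathlib

open MeasureTheory Filter Set

noncomputable section

section Aux

open Real intervalIntegral FourierTransform

/-- `(sin (π w) / (π w))²`, with value `1` at `0`. -/
def sincsq (w : ℝ) : ℝ :=
  if w = 0 then 1 else (Real.sin (Real.pi * w) / (Real.pi * w)) ^ 2

lemma sincsq_nonneg (w : ℝ) : 0 ≤ sincsq w := by
  unfold sincsq; split
  · norm_num
  · positivity

lemma sincsq_le (w : ℝ) : sincsq w ≤ 2 / (1 + w ^ 2) := by
  unfold sincsq; split
  · rename_i h; subst h; norm_num
  · rename_i h
    have h2 : |Real.sin (Real.pi * w)| ≤ |Real.pi * w| := Real.abs_sin_le_abs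
    have h2' : Real.sin (Real.pi * w) ^ 2 ≤ (Real.pi * w) ^ 2 := by
      rw [← sq_abs (Real.sin (Real.pi * w)), ← sq_abs (Real.pi * w)]
      exact pow_le_pow_left₀ (abs_nonneg _) h2 2
    have h1 : Real.sin (Real.pi * w) ^ 2 ≤ 1 := sin_sq_le_one _
    have hpi : (1:ℝ) ≤ Real.pi := by nlinarith [Real.pi_gt_three]
    have hw : 0 < w ^ 2 := by positivity
    have hpw : 0 < (Real.pi * w) ^ 2 := by positivity
    rw [div_pow, div_le_div_iff₀ hpw (by positivity)]
    have h3 : Real.sin (Real.pi * w) ^ 2 * w ^ 2 ≤ w ^ 2 := by nlinarith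
    have hpi2 : (1:ℝ) ≤ Real.pi ^ 2 := by nlinarith
    have h4 : w ^ 2 ≤ Real.pi ^ 2 * w ^ 2 := by nlinarith [mul_le_mul_of_nonneg_right hpi2 hw.le]
    have h5 : (Real.pi * w) ^ 2 = Real.pi ^ 2 * w ^ 2 := by ring
    nlinarith

lemma measurable_sincsq : Measurable sincsq := by
  unfold sincsq
  exact Measurable.ite (measurableSet_eq) measurable_const (by fun_prop)

lemma integrable_sincsq : Integrable sincsq := by
  have haux : Integrable (fun w : ℝ => (2:ℝ) * (1 + w ^ 2)⁻¹) :=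
    integrable_inv_one_add_sq.const_mul 2
  refine haux.mono' measurable_sincsq.aestronglyMeasurable ?_
  filter_upwards with w
  rw [Real.norm_eq_abs, abs_of_nonneg (sincsq_nonneg w)]
  calc sincsq w ≤ 2 / (1 + w ^ 2) := sincsq_le w
  _ = 2 * (1 + w ^ 2)⁻¹ := by rw [div_eq_mul_inv]

lemma prim1 (a : ℂ) (ha : a ≠ 0) :
    ∫ t in (0:ℝ)..1, ((1:ℂ) - t) * Complex.exp (a * t)
      = (Complex.exp a - 1 - a) / a ^ 2 := by
  have key : ∀ t : ℝ, HasDerivAt (fun s : ℝ => Complex.exp (a * s) * ((1 - (s:ℂ)) / a + 1 / a ^ 2))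
      (((1:ℂ) - t) * Complex.exp (a * t)) t := by
    intro t
    have hE : HasDerivAt (fun z : ℂ => Complex.exp (a * z) * ((1 - z) / a + 1 / a ^ 2))
        ((1 - (t:ℂ)) * Complex.exp (a * t)) (t:ℂ) := by
      have h1 : HasDerivAt (fun z : ℂ => a * z) a (t:ℂ) := by
        simpa using (hasDerivAt_id (t:ℂ)).const_mul a
      have h2 : HasDerivAt (fun z : ℂ => Complex.exp (a * z)) (Complex.exp (a * t) * a) (t:ℂ) :=
        (Complex.hasDerivAt_exp (a * t)).comp (t:ℂ) h1
      have h3 : HasDerivAt (fun z : ℂ => (1 - z) / a + 1 / a ^ 2) (-(1/a)) (t:ℂ) := by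
        have : HasDerivAt (fun z : ℂ => (1 - z)) (-1) (t:ℂ) := by
          simpa using (hasDerivAt_id (t:ℂ)).const_sub 1
        have h := (this.div_const a).add_const (1 / a ^ 2); rw [← neg_div]; exact h
      have : HasDerivAt (fun z : ℂ => Complex.exp (a * z) * ((1 - z) / a + 1 / a ^ 2)) _ (t:ℂ) :=
        h2.mul h3
      convert this using 1
      field_simp
      ring
    exact hE.comp_ofReal
  rw [integral_eq_sub_of_hasDerivAt (fun t _ => key t) ?_]
  · have h0 : Complex.exp (a * (0:ℝ)) = 1 := by norm_num
    have h1 : Complex.exp (a * (1:ℝ)) = Complex.exp a := by norm_num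
    rw [h0, h1]
    field_simp
    push_cast; ring
  · apply Continuous.intervalIntegrable
    fun_prop

lemma prim2 (a : ℂ) (ha : a ≠ 0) :
    ∫ t in (-1:ℝ)..0, ((1:ℂ) + t) * Complex.exp (a * t)
      = (Complex.exp (-a) - 1 + a) / a ^ 2 := by
  have key : ∀ t : ℝ, HasDerivAt (fun s : ℝ => Complex.exp (a * s) * ((1 + (s:ℂ)) / a - 1 / a ^ 2))
      (((1:ℂ) + t) * Complex.exp (a * t)) t := by
    intro t
    have hE : HasDerivAt (fun z : ℂ => Complex.exp (a * z) * ((1 + z) / a - 1 / a ^ 2))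
        ((1 + (t:ℂ)) * Complex.exp (a * t)) (t:ℂ) := by
      have h1 : HasDerivAt (fun z : ℂ => a * z) a (t:ℂ) := by
        simpa using (hasDerivAt_id (t:ℂ)).const_mul a
      have h2 : HasDerivAt (fun z : ℂ => Complex.exp (a * z)) (Complex.exp (a * t) * a) (t:ℂ) :=
        (Complex.hasDerivAt_exp (a * t)).comp (t:ℂ) h1
      have h3 : HasDerivAt (fun z : ℂ => (1 + z) / a - 1 / a ^ 2) (1/a) (t:ℂ) := by
        have : HasDerivAt (fun z : ℂ => (1 + z)) 1 (t:ℂ) := by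
          simpa using (hasDerivAt_id (t:ℂ)).const_add 1
        exact (this.div_const a).sub_const (1 / a ^ 2)
      have : HasDerivAt (fun z : ℂ => Complex.exp (a * z) * ((1 + z) / a - 1 / a ^ 2)) _ (t:ℂ) :=
        h2.mul h3
      convert this using 1
      field_simp
      ring
    exact hE.comp_ofReal
  rw [integral_eq_sub_of_hasDerivAt (fun t _ => key t) ?_]
  · have h0 : Complex.exp (a * (0:ℝ)) = 1 := by norm_num
    have h1 : Complex.exp (a * (-1:ℝ)) = Complex.exp (-a) := by norm_num
    rw [h0, h1]
    push_cast
    field_simp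
    ring
  · apply Continuous.intervalIntegrable
    fun_prop

/-- The triangle function on `[-1, 1]`. -/
def Lam : ℝ → ℂ := fun t => ((max 0 (1 - |t|) : ℝ) : ℂ)

lemma Lam_cont : Continuous Lam := by unfold Lam; fun_prop

lemma Lam_supp {t : ℝ} (ht : Lam t ≠ 0) : |t| < 1 := by
  by_contra h
  push_neg at h
  apply ht
  simp only [Lam, Complex.ofReal_eq_zero]
  rw [max_eq_left (by linarith)]

lemma Lam_zero {t : ℝ} (ht : t ∉ Set.Icc (-1:ℝ) 1) : Lam t = 0 := by
  by_contra h
  exact ht (Set.mem_Icc.2 (abs_le.1 (Lam_supp h).le))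

lemma Lam_int : Integrable Lam := by
  apply Lam_cont.integrable_of_hasCompactSupport
  exact HasCompactSupport.intro isCompact_Icc (fun t ht => Lam_zero ht)

lemma fourier_Lam (w : ℝ) : 𝓕 Lam w = (sincsq w : ℂ) := by
  set x : ℝ := -2 * Real.pi * w with hx_def
  set a : ℂ := (x : ℂ) * Complex.I with ha_def
  have step1 : 𝓕 Lam w = ∫ v : ℝ, Complex.exp (a * v) * Lam v := by
    rw [Real.fourier_real_eq_integral_exp_smul]
    congr 1
    funext v
    rw [smul_eq_mul]
    have : ((-2 * Real.pi * v * w : ℝ) : ℂ) * Complex.I = a * v := by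
      rw [ha_def, hx_def]; push_cast; ring
    rw [this]
  have step2 : (∫ v : ℝ, Complex.exp (a * v) * Lam v)
      = ∫ t in (-1:ℝ)..1, Complex.exp (a * t) * Lam t := by
    rw [intervalIntegral.integral_eq_integral_of_support_subset]
    intro t ht
    rw [Function.mem_support] at ht
    have h2 : Lam t ≠ 0 := fun h => ht (by rw [h, mul_zero])
    have := abs_lt.1 (Lam_supp h2)
    exact ⟨this.1, this.2.le⟩
  have hcont : ∀ b c : ℝ, IntervalIntegrable (fun t : ℝ => Complex.exp (a * t) * Lam t)
      MeasureTheory.volume b c := by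
    intro b c
    exact (Continuous.mul (by fun_prop) Lam_cont).intervalIntegrable b c
  have step3 : (∫ t in (-1:ℝ)..1, Complex.exp (a * t) * Lam t)
      = (∫ t in (-1:ℝ)..0, ((1:ℂ) + t) * Complex.exp (a * t))
        + ∫ t in (0:ℝ)..1, ((1:ℂ) - t) * Complex.exp (a * t) := by
    rw [← intervalIntegral.integral_add_adjacent_intervals (b := (0:ℝ)) (hcont _ _) (hcont _ _)]
    congr 1
    · apply intervalIntegral.integral_congr
      intro t ht
      rw [Set.uIcc_of_le (by norm_num : (-1:ℝ) ≤ 0)] at ht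
      have h1 : Lam t = 1 + (t:ℂ) := by
        simp only [Lam]
        rw [abs_of_nonpos ht.2, max_eq_right (by linarith [ht.1] : (0:ℝ) ≤ 1 - -t)]
        push_cast
        ring
      show Complex.exp (a * t) * Lam t = (1 + (t:ℂ)) * Complex.exp (a * t)
      rw [h1]; ring
    · apply intervalIntegral.integral_congr
      intro t ht
      rw [Set.uIcc_of_le (by norm_num : (0:ℝ) ≤ 1)] at ht
      have h1 : Lam t = 1 - (t:ℂ) := by
        simp only [Lam]
        rw [abs_of_nonneg ht.1, max_eq_right (by linarith [ht.2] : (0:ℝ) ≤ 1 - t)]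
        push_cast
        ring
      show Complex.exp (a * t) * Lam t = (1 - (t:ℂ)) * Complex.exp (a * t)
      rw [h1]; ring
  by_cases hw : w = 0
  · subst hw
    have hx0 : x = 0 := by simp [hx_def]
    have ha0 : a = 0 := by rw [ha_def, hx0]; simp
    rw [step1, step2, step3, ha0]
    simp only [zero_mul, Complex.exp_zero, mul_one]
    have e1 : (∫ t in (-1:ℝ)..0, ((1:ℂ) + t)) = 1/2 := by
      rw [intervalIntegral.integral_add (intervalIntegrable_const) ?_]
      · rw [intervalIntegral.integral_const]
        have : (∫ t in (-1:ℝ)..0, (t:ℂ)) = ((∫ t in (-1:ℝ)..0, t : ℝ) : ℂ) :=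
          intervalIntegral.integral_ofReal
        rw [this, integral_id]
        norm_num
      · exact (Continuous.intervalIntegrable (by fun_prop) _ _)
    have e2 : (∫ t in (0:ℝ)..1, ((1:ℂ) - t)) = 1/2 := by
      rw [intervalIntegral.integral_sub (intervalIntegrable_const) ?_]
      · rw [intervalIntegral.integral_const]
        have : (∫ t in (0:ℝ)..1, (t:ℂ)) = ((∫ t in (0:ℝ)..1, t : ℝ) : ℂ) :=
          intervalIntegral.integral_ofReal
        rw [this, integral_id]
        norm_num
      · exact (Continuous.intervalIntegrable (by fun_prop) _ _)
    rw [e1, e2]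
    simp [sincsq]
    norm_num
  · have hx : x ≠ 0 := by
      simp only [hx_def]
      intro h
      have := Real.pi_ne_zero
      rcases mul_eq_zero.1 h with h' | h'
      · norm_num at h'
      · exact hw h'
    have ha : a ≠ 0 :=
      mul_ne_zero (Complex.ofReal_ne_zero.2 hx) Complex.I_ne_zero
    rw [step1, step2, step3, prim1 a ha, prim2 a ha]
    have hexp1 : Complex.exp a = ((Real.cos x : ℝ) : ℂ) + ((Real.sin x : ℝ) : ℂ) * Complex.I := by
      rw [ha_def, Complex.exp_mul_I, ← Complex.ofReal_cos, ← Complex.ofReal_sin]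
    have hexp2 : Complex.exp (-a) = ((Real.cos x : ℝ) : ℂ) - ((Real.sin x : ℝ) : ℂ) * Complex.I := by
      have : -a = ((-x : ℝ) : ℂ) * Complex.I := by rw [ha_def]; push_cast; ring
      rw [this, Complex.exp_mul_I, ← Complex.ofReal_cos, ← Complex.ofReal_sin,
        Real.cos_neg, Real.sin_neg]
      push_cast
      ring
    have ha2 : a ^ 2 = ((-(x^2) : ℝ) : ℂ) := by
      rw [ha_def]
      push_cast
      rw [mul_pow, Complex.I_sq]
      ring
    rw [hexp1, hexp2, ha2, ← add_div]
    have hnum : ((Real.cos x : ℝ) : ℂ) - ((Real.sin x : ℝ) : ℂ) * Complex.I - 1 + a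
        + (((Real.cos x : ℝ) : ℂ) + ((Real.sin x : ℝ) : ℂ) * Complex.I - 1 - a)
        = ((2 * Real.cos x - 2 : ℝ) : ℂ) := by
      push_cast
      ring
    rw [hnum, ← Complex.ofReal_div]
    congr 1
    have hreal : sincsq w = (Real.sin (Real.pi * w))^2 / (Real.pi * w)^2 := by
      rw [sincsq, if_neg hw, div_pow]
    rw [hreal, hx_def]
    have hcos : Real.cos (-2 * Real.pi * w) = 1 - 2 * Real.sin (Real.pi * w) ^ 2 := by
      have h1 : -2 * Real.pi * w = -(2 * (Real.pi * w)) := by ring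
      rw [h1, Real.cos_neg, Real.cos_two_mul]
      nlinarith [Real.sin_sq_add_cos_sq (Real.pi * w)]
    rw [hcos]
    have hpw : (Real.pi * w) ^ 2 ≠ 0 := by
      apply pow_ne_zero
      exact mul_ne_zero Real.pi_ne_zero hw
    field_simp
    ring

lemma integral_sincsq : ∫ w : ℝ, sincsq w = 1 := by
  have hFL : 𝓕 Lam = fun w => (sincsq w : ℂ) := funext fourier_Lam
  have hFint : Integrable (𝓕 Lam) := by
    rw [hFL]
    exact integrable_sincsq.ofReal
  have hinv := Lam_int.fourierInv_fourier_eq hFint (Lam_cont.continuousAt (x := 0))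
  have hLam0 : Lam 0 = 1 := by simp [Lam]
  have hlhs : 𝓕⁻ (𝓕 Lam) 0 = ((∫ w : ℝ, sincsq w : ℝ) : ℂ) := by
    rw [Real.fourierInv_eq, hFL]
    simp only [inner_zero_right, AddChar.map_zero_eq_one, one_smul]
    exact integral_ofReal
  rw [hlhs, hLam0] at hinv
  exact_mod_cast hinv

end Aux

/-- The Fejér kernel on `ℝ`:
`Φ_T(λ) = (1/(2πT))·(sin(Tλ/2)/(λ/2))²` for `λ ≠ 0`, with `Φ_T(0) = T/(2π)`. -/
def fejer (T l : ℝ) : ℝ :=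
  if l = 0 then T / (2 * Real.pi)
  else (1 / (2 * Real.pi * T)) * (Real.sin (T * l / 2) / (l / 2)) ^ 2

section FejerFacts

lemma fejer_eq {T : ℝ} (hT : 0 < T) (l : ℝ) :
    fejer T l = (T / (2 * Real.pi)) * sincsq (T / (2 * Real.pi) * l) := by
  have hπ : Real.pi ≠ 0 := Real.pi_ne_zero
  have hπpos : 0 < Real.pi := Real.pi_pos
  by_cases hl : l = 0
  · subst hl
    simp [fejer, sincsq]
  · have harg : T / (2 * Real.pi) * l ≠ 0 := by
      apply mul_ne_zero _ hl
      positivity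
    rw [fejer, if_neg hl, sincsq, if_neg harg]
    have h1 : Real.pi * (T / (2 * Real.pi) * l) = T * l / 2 := by
      field_simp
    rw [h1]
    field_simp

lemma fejer_nonneg {T : ℝ} (hT : 0 < T) (l : ℝ) : 0 ≤ fejer T l := by
  rw [fejer_eq hT]
  have h1 := sincsq_nonneg (T / (2 * Real.pi) * l)
  have h2 : 0 ≤ T / (2 * Real.pi) := by positivity
  positivity

lemma fejer_neg {T : ℝ} (l : ℝ) : fejer T (-l) = fejer T l := by
  unfold fejer
  rcases eq_or_ne l 0 with h | h
  · subst h; norm_num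
  · rw [if_neg (by simpa using h), if_neg h]
    have h1 : T * -l / 2 = -(T * l / 2) := by ring
    have h2 : -l / 2 = -(l / 2) := by ring
    rw [h1, h2, Real.sin_neg, neg_div_neg_eq]

lemma fejer_sub_comm {T : ℝ} (a b : ℝ) : fejer T (a - b) = fejer T (b - a) := by
  rw [← fejer_neg (l := b - a), neg_sub]

lemma fejer_measurable (T : ℝ) : Measurable (fejer T) := by
  unfold fejer
  exact Measurable.ite measurableSet_eq measurable_const (by fun_prop)

lemma fejer_integrable {T : ℝ} (hT : 0 < T) : Integrable (fejer T) := by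
  have h : fejer T = fun l => (T / (2 * Real.pi)) * sincsq (T / (2 * Real.pi) * l) :=
    funext (fejer_eq hT)
  rw [h]
  apply Integrable.const_mul
  exact integrable_sincsq.comp_mul_left' (by positivity)

lemma fejer_integral {T : ℝ} (hT : 0 < T) : ∫ l : ℝ, fejer T l = 1 := by
  have h : fejer T = fun l => (T / (2 * Real.pi)) * sincsq (T / (2 * Real.pi) * l) :=
    funext (fejer_eq hT)
  rw [h, MeasureTheory.integral_const_mul, Measure.integral_comp_mul_left
    (fun y => sincsq y) (T / (2 * Real.pi)), integral_sincsq]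
  have hpos : 0 < T / (2 * Real.pi) := by positivity
  rw [abs_of_pos (by positivity), smul_eq_mul]
  field_simp

end FejerFacts

section Shear

def shearA : (ℝ × ℝ) ≃ᵐ (ℝ × ℝ) where
  toFun := fun p => (p.1 - p.2, p.2)
  invFun := fun p => (p.1 + p.2, p.2)
  left_inv := fun p => by simp
  right_inv := fun p => by simp
  measurable_toFun := (measurable_fst.sub measurable_snd).prodMk measurable_snd
  measurable_invFun := (measurable_fst.add measurable_snd).prodMk measurable_snd

def shearB : (ℝ × ℝ) ≃ᵐ (ℝ × ℝ) where
  toFun := fun p => (p.2 - p.1, p.1)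
  invFun := fun p => (p.2, p.1 + p.2)
  left_inv := fun p => by simp
  right_inv := fun p => by simp
  measurable_toFun := (measurable_snd.sub measurable_fst).prodMk measurable_fst
  measurable_invFun := measurable_snd.prodMk (measurable_fst.add measurable_snd)

lemma shearA_mp : MeasurePreserving shearA (volume : Measure (ℝ × ℝ)) volume := by
  have := measurePreserving_sub_prod (volume : Measure ℝ) (volume : Measure ℝ)
  rw [← Measure.volume_eq_prod] at this
  exact this

lemma shearB_mp : MeasurePreserving shearB (volume : Measure (ℝ × ℝ)) volume := by
  have h1 := measurePreserving_sub_prod (volume : Measure ℝ) (volume : Measure ℝ)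
  have h2 : MeasurePreserving Prod.swap ((volume : Measure ℝ).prod volume)
      ((volume : Measure ℝ).prod volume) := Measure.measurePreserving_swap
  have := h1.comp h2
  rw [← Measure.volume_eq_prod] at this
  exact this

lemma prod_fact (u v : ℝ → ℝ) (hu : Integrable u) (hv : Integrable v) :
    Integrable (fun q : ℝ × ℝ => u q.1 * v q.2) (volume : Measure (ℝ × ℝ)) ∧
      (∫ q : ℝ × ℝ, u q.1 * v q.2) = (∫ x, u x) * (∫ x, v x) := by
  constructor
  · rw [Measure.volume_eq_prod]
    exact hu.mul_prod hv
  · rw [Measure.volume_eq_prod]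
    exact integral_prod_mul u v

lemma shear1 (u v : ℝ → ℝ) (hu : Integrable u) (hv : Integrable v) :
    Integrable (fun p : ℝ × ℝ => u (p.2 - p.1) * v p.1) ∧
      (∫ p : ℝ × ℝ, u (p.2 - p.1) * v p.1) = (∫ x, u x) * (∫ x, v x) := by
  obtain ⟨hint, heq⟩ := prod_fact u v hu hv
  constructor
  · exact (shearB_mp.integrable_comp hint.aestronglyMeasurable).2 hint
  · rw [← heq]
    exact shearB_mp.integral_comp shearB.measurableEmbedding (fun q : ℝ × ℝ => u q.1 * v q.2)

lemma shear2 (u v : ℝ → ℝ) (hu : Integrable u) (hv : Integrable v) :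
    Integrable (fun p : ℝ × ℝ => u (p.1 - p.2) * v p.2) ∧
      (∫ p : ℝ × ℝ, u (p.1 - p.2) * v p.2) = (∫ x, u x) * (∫ x, v x) := by
  obtain ⟨hint, heq⟩ := prod_fact u v hu hv
  constructor
  · exact (shearA_mp.integrable_comp hint.aestronglyMeasurable).2 hint
  · rw [← heq]
    exact shearA_mp.integral_comp shearA.measurableEmbedding (fun q : ℝ × ℝ => u q.1 * v q.2)

end Shear

lemma alg_bound (a b f1 f2 G M : ℝ) (ha : 0 ≤ a) (hb : 0 ≤ b) (hf10 : 0 ≤ f1) (hf1M : f1 ≤ M)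
    (hf20 : 0 ≤ f2) (hf2M : f2 ≤ M) (hG : 0 ≤ G) (hM : 0 ≤ M) :
    (b ^ 2 * f2 + G + a * b * f2) * f1 ≤ M ^ 2 / 2 * a ^ 2 + (3 * M ^ 2 / 2 * b ^ 2 + M * G) := by
  have h5 : f2 * f1 ≤ M * M := mul_le_mul hf2M hf1M hf10 hM
  have h6 : 2 * (a * b) ≤ a ^ 2 + b ^ 2 := by nlinarith [sq_nonneg (a - b)]
  nlinarith [mul_le_mul_of_nonneg_left h5 (sq_nonneg b),
    mul_le_mul_of_nonneg_left h5 (mul_nonneg ha hb),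
    mul_le_mul_of_nonneg_right h6 (mul_nonneg hM hM),
    mul_le_mul_of_nonneg_right hf1M hG,
    mul_nonneg (mul_nonneg ha hb) (mul_nonneg hf20 hf10)]

/-- Lemma 3.3.  Let `c > 0`, `M ≥ 0`, `f : ℝ → ℝ` measurable with
`0 ≤ f ≤ M`, `φ ∈ L²(ℝ, ℂ)`, and `g ∈ L¹(ℝ)` nonnegative.  Then for all `T > 0` and
`τ₁, τ₂ ∈ ℝ`, the integrand
`(λ₁,λ₂) ↦ [e^{i(τ₁−τ₂)λ₂}(|φ(λ₂)|²f(λ₂) + g(λ₂)) + e^{i(τ₁λ₁+τ₂λ₂)}φ(λ₁)φ(λ₂)f(λ₂)]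
   Φ_T(λ₂−λ₁) f(λ₁)`
is Lebesgue integrable on `ℝ²`, and
`|(2π/c²) ∬ ... dλ₁dλ₂| ≤ (2π/c²)·M·(2M·‖φ‖_{L²}² + ‖g‖_{L¹})`,
uniformly in `T, τ₁, τ₂`. -/
theorem stmt12 (c M : ℝ) (hc : 0 < c) (hM : 0 ≤ M)
    (f : ℝ → ℝ) (hf : Measurable f) (hf0 : ∀ l : ℝ, 0 ≤ f l) (hfM : ∀ l : ℝ, f l ≤ M)
    (φ : ℝ → ℂ) (hφ : MemLp φ 2)
    (g : ℝ → ℝ) (hg1 : Integrable g) (hg0 : ∀ l : ℝ, 0 ≤ g l)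
    (T : ℝ) (hT : 0 < T) (τ₁ τ₂ : ℝ) :
    Integrable (fun p : ℝ × ℝ =>
      (Complex.exp (Complex.I * (((τ₁ - τ₂) * p.2 : ℝ) : ℂ))
          * ((‖φ p.2‖ ^ 2 * f p.2 + g p.2 : ℝ) : ℂ)
        + Complex.exp (Complex.I * ((τ₁ * p.1 + τ₂ * p.2 : ℝ) : ℂ))
          * φ p.1 * φ p.2 * ((f p.2 : ℝ) : ℂ))
      * ((fejer T (p.2 - p.1) * f p.1 : ℝ) : ℂ)) ∧
    ‖((2 * Real.pi / c ^ 2 : ℝ) : ℂ) *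
      ∫ p : ℝ × ℝ,
        (Complex.exp (Complex.I * (((τ₁ - τ₂) * p.2 : ℝ) : ℂ))
            * ((‖φ p.2‖ ^ 2 * f p.2 + g p.2 : ℝ) : ℂ)
          + Complex.exp (Complex.I * ((τ₁ * p.1 + τ₂ * p.2 : ℝ) : ℂ))
            * φ p.1 * φ p.2 * ((f p.2 : ℝ) : ℂ))
        * ((fejer T (p.2 - p.1) * f p.1 : ℝ) : ℂ)‖
      ≤ (2 * Real.pi / c ^ 2) * M *
          (2 * M * (∫ l : ℝ, ‖φ l‖ ^ 2) + ∫ l : ℝ, |g l|) := by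
  -- notation
  set F : ℝ × ℝ → ℂ := fun p =>
      (Complex.exp (Complex.I * (((τ₁ - τ₂) * p.2 : ℝ) : ℂ))
          * ((‖φ p.2‖ ^ 2 * f p.2 + g p.2 : ℝ) : ℂ)
        + Complex.exp (Complex.I * ((τ₁ * p.1 + τ₂ * p.2 : ℝ) : ℂ))
          * φ p.1 * φ p.2 * ((f p.2 : ℝ) : ℂ))
      * ((fejer T (p.2 - p.1) * f p.1 : ℝ) : ℂ) with hF_def
  -- the integrable weight |φ|²
  have hA : Integrable (fun x : ℝ => ‖φ x‖ ^ 2) := by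
    have h0 := hφ.integrable_norm_rpow (by norm_num) (by norm_num)
    have h2 : ENNReal.toReal 2 = 2 := by norm_num
    rw [h2] at h0
    refine h0.congr ?_
    filter_upwards with x
    rw [show (2:ℝ) = ((2:ℕ):ℝ) by norm_num, Real.rpow_natCast]
  set A : ℝ → ℝ := fun x => ‖φ x‖ ^ 2 with hA_def
  set u1 : ℝ → ℝ := fun x => M ^ 2 / 2 * A x with hu1_def
  set u2 : ℝ → ℝ := fun x => 3 * M ^ 2 / 2 * A x + M * g x with hu2_def
  have hu1 : Integrable u1 := hA.const_mul _
  have hu2 : Integrable u2 := (hA.const_mul _).add (hg1.const_mul _)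
  -- dominating function
  set D : ℝ × ℝ → ℝ := fun p => fejer T (p.2 - p.1) * u1 p.1 + fejer T (p.2 - p.1) * u2 p.2
    with hD_def
  have hS1 := shear1 (fejer T) u1 (fejer_integrable hT) hu1
  have hS2 := shear2 (fejer T) u2 (fejer_integrable hT) hu2
  have hterm2_eq : (fun p : ℝ × ℝ => fejer T (p.1 - p.2) * u2 p.2)
      = fun p : ℝ × ℝ => fejer T (p.2 - p.1) * u2 p.2 := by
    funext p
    rw [fejer_sub_comm]
  have hD_int : Integrable D := by
    apply hS1.1.add
    rw [← hterm2_eq]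
    exact hS2.1
  have hD_intval : (∫ p : ℝ × ℝ, D p)
      = (∫ x, u1 x) + (∫ x, u2 x) := by
    rw [hD_def]
    rw [integral_add hS1.1 (by rw [← hterm2_eq]; exact hS2.1)]
    rw [hS1.2]
    have : (∫ p : ℝ × ℝ, fejer T (p.2 - p.1) * u2 p.2)
        = (∫ x, fejer T x) * ∫ x, u2 x := by
      rw [← hterm2_eq] at *
      exact hS2.2
    rw [this, fejer_integral hT, one_mul, one_mul]
  -- pointwise bound
  have hbd : ∀ p : ℝ × ℝ, ‖F p‖ ≤ D p := by
    intro p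
    have hΦ : 0 ≤ fejer T (p.2 - p.1) := fejer_nonneg hT _
    have hr3 : (0:ℝ) ≤ fejer T (p.2 - p.1) * f p.1 := mul_nonneg hΦ (hf0 _)
    have hE1 : ‖Complex.exp (Complex.I * (((τ₁ - τ₂) * p.2 : ℝ) : ℂ))‖ = 1 := by
      rw [Complex.norm_exp]
      simp
    have hE2 : ‖Complex.exp (Complex.I * ((τ₁ * p.1 + τ₂ * p.2 : ℝ) : ℂ))‖ = 1 := by
      rw [Complex.norm_exp]
      simp
    have hr1 : (0:ℝ) ≤ ‖φ p.2‖ ^ 2 * f p.2 + g p.2 := by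
      have h01 := hf0 p.2
      have h02 := hg0 p.2
      positivity
    have e1 : ‖Complex.exp (Complex.I * (((τ₁ - τ₂) * p.2 : ℝ) : ℂ))
          * ((‖φ p.2‖ ^ 2 * f p.2 + g p.2 : ℝ) : ℂ)‖
        = ‖φ p.2‖ ^ 2 * f p.2 + g p.2 := by
      rw [norm_mul, hE1, one_mul, Complex.norm_real, Real.norm_eq_abs, abs_of_nonneg hr1]
    have e2 : ‖Complex.exp (Complex.I * ((τ₁ * p.1 + τ₂ * p.2 : ℝ) : ℂ))
          * φ p.1 * φ p.2 * ((f p.2 : ℝ) : ℂ)‖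
        = ‖φ p.1‖ * ‖φ p.2‖ * f p.2 := by
      rw [norm_mul, norm_mul, norm_mul, hE2, one_mul, Complex.norm_real, Real.norm_eq_abs,
        abs_of_nonneg (hf0 p.2)]
    have hsum : ‖Complex.exp (Complex.I * (((τ₁ - τ₂) * p.2 : ℝ) : ℂ))
          * ((‖φ p.2‖ ^ 2 * f p.2 + g p.2 : ℝ) : ℂ)
        + Complex.exp (Complex.I * ((τ₁ * p.1 + τ₂ * p.2 : ℝ) : ℂ))
          * φ p.1 * φ p.2 * ((f p.2 : ℝ) : ℂ)‖
        ≤ ‖φ p.2‖ ^ 2 * f p.2 + g p.2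
          + ‖φ p.1‖ * ‖φ p.2‖ * f p.2 := by
      refine (norm_add_le _ _).trans ?_
      rw [e1, e2]
    have hFp : ‖F p‖ = ‖Complex.exp (Complex.I * (((τ₁ - τ₂) * p.2 : ℝ) : ℂ))
          * ((‖φ p.2‖ ^ 2 * f p.2 + g p.2 : ℝ) : ℂ)
        + Complex.exp (Complex.I * ((τ₁ * p.1 + τ₂ * p.2 : ℝ) : ℂ))
          * φ p.1 * φ p.2 * ((f p.2 : ℝ) : ℂ)‖ * (fejer T (p.2 - p.1) * f p.1) := by
      simp only [hF_def]
      rw [norm_mul, Complex.norm_real, Real.norm_eq_abs, abs_of_nonneg hr3]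
    have step1 : ‖F p‖ ≤ (‖φ p.2‖ ^ 2 * f p.2 + g p.2
          + ‖φ p.1‖ * ‖φ p.2‖ * f p.2)
          * (fejer T (p.2 - p.1) * f p.1) := by
      rw [hFp]
      exact mul_le_mul_of_nonneg_right hsum hr3
    refine step1.trans ?_
    have key := alg_bound (‖φ p.1‖) (‖φ p.2‖) (f p.1) (f p.2)
      (g p.2) M (norm_nonneg _) (norm_nonneg _) (hf0 p.1) (hfM p.1)
      (hf0 p.2) (hfM p.2) (hg0 p.2) hM
    have step2 := mul_le_mul_of_nonneg_left key hΦ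
    have eqL : (‖φ p.2‖ ^ 2 * f p.2 + g p.2
          + ‖φ p.1‖ * ‖φ p.2‖ * f p.2)
          * (fejer T (p.2 - p.1) * f p.1)
        = fejer T (p.2 - p.1) * ((‖φ p.2‖ ^ 2 * f p.2 + g p.2
          + ‖φ p.1‖ * ‖φ p.2‖ * f p.2) * f p.1) := by ring
    have eqR : fejer T (p.2 - p.1) * (M ^ 2 / 2 * ‖φ p.1‖ ^ 2
          + (3 * M ^ 2 / 2 * ‖φ p.2‖ ^ 2 + M * g p.2)) = D p := by
      simp only [hD_def, hu1_def, hu2_def, hA_def]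
      ring
    rw [eqL, ← eqR]
    exact step2
  -- measurability of F
  have hFm : AEStronglyMeasurable F (volume : Measure (ℝ × ℝ)) := by
    have hφ1 : AEStronglyMeasurable (fun p : ℝ × ℝ => φ p.1) (volume : Measure (ℝ × ℝ)) := by
      rw [Measure.volume_eq_prod]; exact hφ.aestronglyMeasurable.comp_fst
    have hφ2 : AEStronglyMeasurable (fun p : ℝ × ℝ => φ p.2) (volume : Measure (ℝ × ℝ)) := by
      rw [Measure.volume_eq_prod]; exact hφ.aestronglyMeasurable.comp_snd
    have hg2 : AEStronglyMeasurable (fun p : ℝ × ℝ => g p.2) (volume : Measure (ℝ × ℝ)) := by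
      rw [Measure.volume_eq_prod]; exact hg1.aestronglyMeasurable.comp_snd
    have hE1 : AEStronglyMeasurable
        (fun p : ℝ × ℝ => Complex.exp (Complex.I * (((τ₁ - τ₂) * p.2 : ℝ) : ℂ)))
        (volume : Measure (ℝ × ℝ)) := by
      apply Continuous.aestronglyMeasurable
      fun_prop
    have hE2 : AEStronglyMeasurable
        (fun p : ℝ × ℝ => Complex.exp (Complex.I * ((τ₁ * p.1 + τ₂ * p.2 : ℝ) : ℂ)))
        (volume : Measure (ℝ × ℝ)) := by
      apply Continuous.aestronglyMeasurable
      fun_prop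
    have habs2 : AEStronglyMeasurable
        (fun p : ℝ × ℝ => ((‖φ p.2‖ ^ 2 * f p.2 + g p.2 : ℝ) : ℂ))
        (volume : Measure (ℝ × ℝ)) := by
      apply Complex.continuous_ofReal.comp_aestronglyMeasurable
      apply AEStronglyMeasurable.add
      · exact ((continuous_norm.comp_aestronglyMeasurable hφ2).pow 2).mul
          ((hf.comp measurable_snd).aestronglyMeasurable)
      · exact hg2
    have hf2c : AEStronglyMeasurable (fun p : ℝ × ℝ => ((f p.2 : ℝ) : ℂ))
        (volume : Measure (ℝ × ℝ)) :=
      Complex.continuous_ofReal.comp_aestronglyMeasurable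
        ((hf.comp measurable_snd).aestronglyMeasurable)
    have hker : AEStronglyMeasurable
        (fun p : ℝ × ℝ => ((fejer T (p.2 - p.1) * f p.1 : ℝ) : ℂ))
        (volume : Measure (ℝ × ℝ)) := by
      apply Complex.continuous_ofReal.comp_aestronglyMeasurable
      exact (((fejer_measurable T).comp (measurable_snd.sub measurable_fst)).mul
        (hf.comp measurable_fst)).aestronglyMeasurable
    exact (((hE1.mul habs2).add (((hE2.mul hφ1).mul hφ2).mul hf2c)).mul hker)
  have hF_int : Integrable F :=
    hD_int.mono' hFm (Filter.Eventually.of_forall hbd)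
  refine ⟨hF_int, ?_⟩
  -- the bound
  have hcoef : (0:ℝ) ≤ 2 * Real.pi / c ^ 2 := by positivity
  rw [norm_mul, Complex.norm_real, Real.norm_eq_abs, abs_of_nonneg hcoef]
  have h1 : ‖∫ p : ℝ × ℝ, F p‖ ≤ ∫ p : ℝ × ℝ, D p := by
    refine (norm_integral_le_integral_norm _).trans ?_
    exact integral_mono hF_int.norm hD_int hbd
  have h2 : (∫ p : ℝ × ℝ, D p) = M * (2 * M * (∫ l : ℝ, ‖φ l‖ ^ 2) + ∫ l : ℝ, |g l|) := by
    rw [hD_intval, hu1_def, hu2_def]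
    have hgabs : (∫ l : ℝ, |g l|) = ∫ l : ℝ, g l := by
      congr 1
      funext l
      exact abs_of_nonneg (hg0 l)
    rw [hgabs]
    rw [integral_const_mul, integral_add (hA.const_mul _) (hg1.const_mul _),
      integral_const_mul, integral_const_mul]
    rw [hA_def]
    ring
  calc (2 * Real.pi / c ^ 2) * ‖∫ p : ℝ × ℝ, F p‖
      ≤ (2 * Real.pi / c ^ 2) * ∫ p : ℝ × ℝ, D p := by
        exact mul_le_mul_of_nonneg_left h1 hcoef
  _ = (2 * Real.pi / c ^ 2) * M *
        (2 * M * (∫ l : ℝ, ‖φ l‖ ^ 2) + ∫ l : ℝ, |g l|) := by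
      rw [h2]; ring
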